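/- Let 0 < ε ≤ 1/4 and let M1 be an AMA menu indexed by {0,...,K} with K+1 ≥ ⌈16m³/ε²⌉^{2nm} options. Then there exists a 0-reducible AMA menu M̃1 on the same index set such that for every λ ∈ [0,1], the convex combination M = λ M1 + (1−λ) M̃1 satisfies Rev(M) ≥ Rev(M1) − ε. -/

import Mathlib

/-!
Round every allocation of `M₁` down to the grid `(1/D)ℕ`, with `D ≈ 16 m³ / ε²`, and shrink
every boost by the factor `1 - ν`. Options of the new menu with the same rounded allocation differ
only in their boost, so the default option together with one option of largest boost per grid
cell always contains the relevant maximizers: at most `(D + 1)^(nm) + 1 ≤ √(K + 1)` options.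

Along the segment from `M₁` to this menu, allocations drop by at most `(1 - λ)/D` per entry, so
welfares drop by at most `δ = m (1 - λ)/D`, and boosts shrink by the factor `1 - μ`,
`μ = (1 - λ) ν`. The terms `W(v₋ᵢ) - W(v)` of the payment then move by `O(δ + μ m)`, and shrinking
the boosts makes it unprofitable for the chosen maximizer to give up more than
`δ / μ = m / (D ν)` of welfare, which controls `W(v) - β_min`.
The choice `ν = ε / (5 m²)` keeps the total loss below `ε`.
-/

open MeasureTheory Finset

namespace AMA

/-- An AMA menu: for each of the `K+1` option indices, an allocation
`x : Fin m → Fin n → ℝ` (buyer `i` receives `x i j` of item `j`) and a boost `β : ℝ`. -/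
abbrev Menu (m n K : ℕ) := Fin (K + 1) → (Fin m → Fin n → ℝ) × ℝ

/-- Inner product of a valuation and an allocation. -/
def dotp {n : ℕ} (v x : Fin n → ℝ) : ℝ := ∑ j, v j * x j

/-- A valid AMA menu: entries in `[0,1]`, each item allocated at most once in total,
default option `(0, 0)`. -/
def IsMenu {m n K : ℕ} (M : Menu m n K) : Prop :=
  (∀ k i j, 0 ≤ (M k).1 i j ∧ (M k).1 i j ≤ 1) ∧
  (∀ k j, ∑ i, (M k).1 i j ≤ 1) ∧ M 0 = 0

/-- The set of valuation profiles: each buyer's valuation lies in `[0,1]^n` with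
coordinate sum at most `1`. -/
def VP (m n : ℕ) : Set (Fin m → Fin n → ℝ) :=
  {v | ∀ i, (∀ j, 0 ≤ v i j ∧ v i j ≤ 1) ∧ ∑ j, v i j ≤ 1}

/-- Boosted welfare of option `k` at the valuation profile `v`. -/
def bw {m n K : ℕ} (M : Menu m n K) (v : Fin m → Fin n → ℝ) (k : Fin (K + 1)) : ℝ :=
  (∑ i, dotp (v i) ((M k).1 i)) + (M k).2

/-- Boosted welfare of option `k` at `v` when buyer `i` is omitted. -/
def bwWo {m n K : ℕ} (M : Menu m n K) (v : Fin m → Fin n → ℝ) (i : Fin m)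
    (k : Fin (K + 1)) : ℝ :=
  (∑ l ∈ Finset.univ.erase i, dotp (v l) ((M k).1 l)) + (M k).2

/-- Maximal boosted welfare `W(v)`. -/
noncomputable def W {m n K : ℕ} (M : Menu m n K) (v : Fin m → Fin n → ℝ) : ℝ :=
  Finset.univ.sup' Finset.univ_nonempty (bw M v)

/-- Maximal boosted welfare `W(v₋ᵢ)` with buyer `i` omitted. -/
noncomputable def WWo {m n K : ℕ} (M : Menu m n K) (v : Fin m → Fin n → ℝ)
    (i : Fin m) : ℝ :=
  Finset.univ.sup' Finset.univ_nonempty (bwWo M v i)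

/-- The minimal boost among boosted-welfare-maximizing options (tie-breaking in favor
of maximal total payment). -/
noncomputable def minBeta {m n K : ℕ} (M : Menu m n K) (v : Fin m → Fin n → ℝ) : ℝ :=
  sInf {b : ℝ | ∃ k, bw M v k = W M v ∧ b = (M k).2}

/-- Total payment collected at `v`:
`∑ i W(v₋ᵢ) − (m−1) W(v) − min {β k : W_k(v) = W(v)}`. -/
noncomputable def pay {m n K : ℕ} (M : Menu m n K) (v : Fin m → Fin n → ℝ) : ℝ :=
  (∑ i, WWo M v i) - ((m : ℝ) - 1) * W M v - minBeta M v

/-- Expected revenue of the AMA menu `M` under the profile distribution `F`. -/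
noncomputable def Rev {m n K : ℕ} (F : Measure (Fin m → Fin n → ℝ))
    (M : Menu m n K) : ℝ :=
  ∫ v, pay M v ∂F

/-- Option-wise convex combination of two AMA menus. -/
noncomputable def comb {m n K : ℕ} (lam : ℝ) (M M' : Menu m n K) : Menu m n K :=
  fun k => (fun i j => lam * (M k).1 i j + (1 - lam) * (M' k).1 i j,
            lam * (M k).2 + (1 - lam) * (M' k).2)

/-- The event that the option subset `K'` suffices at `v`: some boosted-welfare
maximizer with minimal boost lies in `K'`, and for every buyer `i` some maximizer of the
boosted welfare of `v₋ᵢ` lies in `K'`. -/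
def GoodEvent {m n K : ℕ} (M : Menu m n K) (K' : Finset (Fin (K + 1)))
    (v : Fin m → Fin n → ℝ) : Prop :=
  (∃ k ∈ K', bw M v k = W M v ∧ (M k).2 = minBeta M v) ∧
  ∀ i : Fin m, ∃ k ∈ K', bwWo M v i k = WWo M v i

/-- `M` is `ε`-reducible: some subset `K'` of options containing the default option, of
cardinality at most `√(K+1)`, whose good event has probability at least `1 - ε/m`. -/
def Reducible {m n K : ℕ} (F : Measure (Fin m → Fin n → ℝ)) (M : Menu m n K)
    (ε : ℝ) : Prop :=
  ∃ K' : Finset (Fin (K + 1)), 0 ∈ K' ∧ (K'.card : ℝ) ≤ Real.sqrt (K + 1) ∧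
    (F {v | GoodEvent M K' v}).toReal ≥ 1 - ε / (m : ℝ)

/-- `M₁` and `M₂` are `ε`-mode-connected by a piecewise linear path with `pieces`
linear pieces, all whose menus are valid AMA menus and have revenue at least
`min (Rev M₁) (Rev M₂) - ε`. -/
def PLConnected {m n K : ℕ} (F : Measure (Fin m → Fin n → ℝ)) (M₁ M₂ : Menu m n K)
    (ε : ℝ) (pieces : ℕ) : Prop :=
  ∃ P : Fin (pieces + 1) → Menu m n K, P 0 = M₁ ∧ P (Fin.last pieces) = M₂ ∧
    (∀ i, IsMenu (P i)) ∧
    ∀ i : Fin pieces, ∀ lam ∈ Set.Icc (0 : ℝ) 1,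
      Rev F (comb lam (P i.castSucc) (P i.succ)) ≥ min (Rev F M₁) (Rev F M₂) - ε

def welfare {m n K : ℕ} (M : Menu m n K) (v : Fin m → Fin n → ℝ) (s : Finset (Fin m))
    (k : Fin (K + 1)) : ℝ :=
  ∑ i ∈ s, dotp (v i) ((M k).1 i)

section Welfare

variable {m n K : ℕ} (M : Menu m n K) (v : Fin m → Fin n → ℝ)

lemma bw_eq_welfare (k : Fin (K + 1)) : bw M v k = welfare M v univ k + (M k).2 := rfl

lemma bwWo_eq_welfare (i : Fin m) (k : Fin (K + 1)) :
    bwWo M v i k = welfare M v (univ.erase i) k + (M k).2 := rfl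

lemma bw_le_W (k : Fin (K + 1)) : bw M v k ≤ W M v :=
  le_sup' _ (mem_univ k)

lemma bwWo_le_WWo (i : Fin m) (k : Fin (K + 1)) : bwWo M v i k ≤ WWo M v i :=
  le_sup' _ (mem_univ k)

lemma exists_bw_eq_W : ∃ k, bw M v k = W M v := by
  obtain ⟨k, -, hk⟩ := exists_mem_eq_sup' univ_nonempty (bw M v)
  exact ⟨k, hk.symm⟩

lemma exists_bwWo_eq_WWo (i : Fin m) : ∃ k, bwWo M v i k = WWo M v i := by
  obtain ⟨k, -, hk⟩ := exists_mem_eq_sup' univ_nonempty (bwWo M v i)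
  exact ⟨k, hk.symm⟩

lemma finite_minBeta_set : {b : ℝ | ∃ k, bw M v k = W M v ∧ b = (M k).2}.Finite :=
  (Set.finite_range fun k => (M k).2).subset (by rintro _ ⟨k, -, rfl⟩; exact ⟨k, rfl⟩)

lemma minBeta_le {k : Fin (K + 1)} (hk : bw M v k = W M v) : minBeta M v ≤ (M k).2 :=
  csInf_le (finite_minBeta_set M v).bddBelow ⟨k, hk, rfl⟩

lemma exists_minBeta_eq : ∃ k, bw M v k = W M v ∧ (M k).2 = minBeta M v := by
  obtain ⟨k₀, hk₀⟩ := exists_bw_eq_W M v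
  obtain ⟨k, hk, hb⟩ :=
    Set.Nonempty.csInf_mem (s := {b : ℝ | ∃ k, bw M v k = W M v ∧ b = (M k).2})
      ⟨(M k₀).2, k₀, hk₀, rfl⟩ (finite_minBeta_set M v)
  exact ⟨k, hk, hb.symm⟩

lemma pay_eq_sum_add : pay M v = ∑ i, (WWo M v i - W M v) + (W M v - minBeta M v) := by
  rw [pay, sum_sub_distrib, sum_const, card_univ, Fintype.card_fin, nsmul_eq_mul]
  ring

end Welfare

lemma pay_eq_zero_of_no_items {m K : ℕ} (M : Menu m 0 K) (v : Fin m → Fin 0 → ℝ) :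
    pay M v = 0 := by
  have hw : ∀ s k, welfare M v s k = 0 := fun s k => by simp [welfare, dotp]
  have hWWo : ∀ i, WWo M v i = W M v := fun i => by
    have : bwWo M v i = bw M v := funext fun k => by rw [bwWo_eq_welfare, bw_eq_welfare, hw, hw]
    rw [WWo, W, this]
  obtain ⟨k, hk, hβ⟩ := exists_minBeta_eq M v
  rw [pay_eq_sum_add, ← hβ]
  simp only [hWWo, sub_self, sum_const_zero, zero_add]
  rw [← hk, bw_eq_welfare, hw, zero_add, sub_self]

section Bounds

variable {m n K : ℕ} {M : Menu m n K} {v : Fin m → Fin n → ℝ}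

lemma dotp_nonneg {u x : Fin n → ℝ} (hu : ∀ j, 0 ≤ u j) (hx : ∀ j, 0 ≤ x j) :
    0 ≤ dotp u x :=
  sum_nonneg fun j _ => mul_nonneg (hu j) (hx j)

lemma dotp_le_sum {u x : Fin n → ℝ} (hu : ∀ j, 0 ≤ u j) (hx : ∀ j, x j ≤ 1) :
    dotp u x ≤ ∑ j, u j :=
  sum_le_sum fun j _ => mul_le_of_le_one_right (hu j) (hx j)

lemma dotp_mem_Icc (hM : IsMenu M) (hv : v ∈ VP m n) (i : Fin m) (k : Fin (K + 1)) :
    0 ≤ dotp (v i) ((M k).1 i) ∧ dotp (v i) ((M k).1 i) ≤ 1 :=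
  ⟨dotp_nonneg (fun j => ((hv i).1 j).1) (fun j => (hM.1 k i j).1),
    (dotp_le_sum (fun j => ((hv i).1 j).1) (fun j => (hM.1 k i j).2)).trans (hv i).2⟩

lemma welfare_nonneg (hM : IsMenu M) (hv : v ∈ VP m n) (s : Finset (Fin m))
    (k : Fin (K + 1)) : 0 ≤ welfare M v s k :=
  sum_nonneg fun i _ => (dotp_mem_Icc hM hv i k).1

lemma welfare_le (hM : IsMenu M) (hv : v ∈ VP m n) (s : Finset (Fin m)) (k : Fin (K + 1)) :
    welfare M v s k ≤ m :=
  calc welfare M v s k ≤ ∑ _i ∈ s, (1 : ℝ) :=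
        sum_le_sum fun i _ => (dotp_mem_Icc hM hv i k).2
    _ = s.card := by simp
    _ ≤ m := by exact_mod_cast (card_le_univ s).trans (Fintype.card_fin m).le

lemma WWo_sub_W_mem_Icc (hM : IsMenu M) (hv : v ∈ VP m n) (i : Fin m) :
    -1 ≤ WWo M v i - W M v ∧ WWo M v i - W M v ≤ 0 := by
  have herase : ∀ k, bwWo M v i k + dotp (v i) ((M k).1 i) = bw M v k := fun k => by
    rw [bwWo_eq_welfare, bw_eq_welfare, welfare, welfare, ← add_sum_erase _ _ (mem_univ i)]
    ring
  obtain ⟨k, hk⟩ := exists_bw_eq_W M v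
  have hle : WWo M v i ≤ W M v := sup'_le _ _ fun k _ =>
    (le_add_of_nonneg_right (dotp_mem_Icc hM hv i k).1).trans ((herase k).le.trans (bw_le_W M v k))
  have hge : W M v - 1 ≤ WWo M v i := by
    linarith [herase k, (dotp_mem_Icc hM hv i k).2, bwWo_le_WWo M v i k]
  constructor <;> linarith

lemma W_sub_minBeta_mem_Icc (hM : IsMenu M) (hv : v ∈ VP m n) :
    0 ≤ W M v - minBeta M v ∧ W M v - minBeta M v ≤ m := by
  obtain ⟨k, hk, hβ⟩ := exists_minBeta_eq M v
  have : W M v - minBeta M v = welfare M v univ k := by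
    rw [← hk, ← hβ, bw_eq_welfare]; ring
  rw [this]
  exact ⟨welfare_nonneg hM hv _ k, welfare_le hM hv _ k⟩

lemma abs_pay_le (hM : IsMenu M) (hv : v ∈ VP m n) : |pay M v| ≤ m := by
  have hsum : ∑ i, (WWo M v i - W M v) ∈ Set.Icc (-(m : ℝ)) 0 := by
    constructor
    · calc -(m : ℝ) = ∑ _i : Fin m, (-1 : ℝ) := by simp
        _ ≤ _ := sum_le_sum fun i _ => (WWo_sub_W_mem_Icc hM hv i).1
    · exact sum_nonpos fun i _ => (WWo_sub_W_mem_Icc hM hv i).2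
  rw [pay_eq_sum_add, abs_le]
  have := W_sub_minBeta_mem_Icc hM hv
  constructor <;> linarith [hsum.1, hsum.2]

end Bounds

section Measurability

variable {m n K : ℕ} (M : Menu m n K)

lemma continuous_W : Continuous (W M) := by
  unfold W bw dotp
  fun_prop

lemma continuous_WWo (i : Fin m) : Continuous fun v => WWo M v i := by
  unfold WWo bwWo dotp
  fun_prop

lemma measurable_minBeta : Measurable (minBeta M) := by
  classical
  set B := univ.sup' univ_nonempty fun k => (M k).2
  have hrepr : minBeta M = univ.inf' univ_nonempty
      fun k v => if bw M v k = W M v then (M k).2 else B := by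
    funext v
    rw [Finset.inf'_apply]
    obtain ⟨k₀, hk₀, hβ₀⟩ := exists_minBeta_eq M v
    refine le_antisymm ?_ ((inf'_le _ (mem_univ k₀)).trans (by simp [hk₀, hβ₀]))
    refine le_inf' _ _ fun k _ => ?_
    split_ifs with hk
    · exact minBeta_le M v hk
    · exact hβ₀ ▸ le_sup' (fun k => (M k).2) (mem_univ k₀)
  rw [hrepr]
  refine inf'_induction _ _ (fun _ hf _ hg => hf.inf hg) fun k _ => ?_
  exact Measurable.ite (measurableSet_eq_fun (by unfold bw dotp; fun_prop)
    (continuous_W M).measurable) measurable_const measurable_const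

lemma measurable_pay : Measurable (pay M) :=
  ((Finset.measurable_sum _ fun i _ => (continuous_WWo M i).measurable).sub
    ((continuous_W M).measurable.const_mul _)).sub (measurable_minBeta M)

end Measurability

section Integration

variable {m n K : ℕ} (F : Measure (Fin m → Fin n → ℝ)) [IsProbabilityMeasure F]

lemma measurableSet_VP : MeasurableSet (VP m n) := by
  simp only [VP, Set.ofPred_forall, Set.ofPred_and]
  refine MeasurableSet.iInter fun i => .inter (.iInter fun j => .inter ?_ ?_) ?_ <;>
    exact measurableSet_le (by fun_prop) (by fun_prop)

lemma ae_mem_VP (hFV : F (VP m n) = 1) : ∀ᵐ v ∂F, v ∈ VP m n := by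
  rw [ae_iff, ← Set.compl_def, prob_compl_eq_zero_iff measurableSet_VP, hFV]

lemma integrable_pay (hFV : F (VP m n) = 1) {M : Menu m n K} (hM : IsMenu M) :
    Integrable (pay M) F :=
  (integrable_const (m : ℝ)).mono' (measurable_pay M).aestronglyMeasurable <|
    (ae_mem_VP F hFV).mono fun _ hv => by simpa using abs_pay_le hM hv

lemma rev_sub_le_rev (hFV : F (VP m n) = 1) {M M' : Menu m n K} (hM : IsMenu M)
    (hM' : IsMenu M') {e : ℝ} (h : ∀ v ∈ VP m n, pay M v - e ≤ pay M' v) :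
    Rev F M - e ≤ Rev F M' := by
  have hmono : ∫ v, (pay M v - e) ∂F ≤ ∫ v, pay M' v ∂F :=
    integral_mono_ae ((integrable_pay F hFV hM).sub (integrable_const e))
      (integrable_pay F hFV hM') ((ae_mem_VP F hFV).mono h)
  rwa [integral_sub (integrable_pay F hFV hM) (integrable_const e), integral_const,
    probReal_univ, one_smul] at hmono

end Integration

section Perturbation

variable {m n K : ℕ} {M C : Menu m n K} {v : Fin m → Fin n → ℝ} {δ μ : ℝ}

lemma WWo_sub_W_le_of_perturb
    (hw : ∀ s k, welfare C v s k ≤ welfare M v s k ∧ welfare M v s k ≤ welfare C v s k + δ)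
    (hβ : ∀ k, (C k).2 = (1 - μ) * (M k).2) (hμ0 : 0 ≤ μ) (hμ : μ ≤ 1 / 2) {B : ℝ}
    (hB : ∀ k, 0 ≤ welfare M v univ k ∧ welfare M v univ k ≤ B) (i : Fin m) :
    WWo M v i - W M v ≤ WWo C v i - W C v + (δ + 2 * μ * (B + δ)) := by
  obtain ⟨q, hq⟩ := exists_bw_eq_W C v
  obtain ⟨p, hp⟩ := exists_bwWo_eq_WWo M v i
  have hCq : W C v ≤ W M v - μ * (M q).2 := by
    have := bw_le_W M v q
    rw [bw_eq_welfare] at this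
    rw [← hq, bw_eq_welfare, hβ]
    linarith [(hw univ q).1]
  have hCp : WWo M v i - δ - μ * (M p).2 ≤ WWo C v i := by
    have := bwWo_le_WWo C v i p
    rw [bwWo_eq_welfare, hβ] at this
    rw [← hp, bwWo_eq_welfare]
    linarith [(hw (univ.erase i) p).2]
  have hqp : -(B + δ) ≤ (1 - μ) * ((M q).2 - (M p).2) := by
    have := bw_le_W C v p
    rw [← hq, bw_eq_welfare, bw_eq_welfare, hβ, hβ] at this
    linarith [(hw univ p).2, (hw univ q).1, hB p, hB q]
  have hBδ : 0 ≤ B + δ := by linarith [hB q, hw univ q]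
  have hμqp : 0 ≤ (M q).2 - (M p).2 + 2 * (B + δ) := by
    rcases le_or_gt 0 ((M q).2 - (M p).2) with h | h
    · linarith
    · nlinarith
  nlinarith [mul_nonneg hμ0 hμqp]

lemma W_sub_minBeta_le_of_perturb
    (hw : ∀ s k, welfare C v s k ≤ welfare M v s k ∧ welfare M v s k ≤ welfare C v s k + δ)
    (hβ : ∀ k, (C k).2 = (1 - μ) * (M k).2) (hμ0 : 0 < μ) (hμ1 : μ ≤ 1) :
    W M v - minBeta M v ≤ W C v - minBeta C v + (δ + δ / μ) := by
  obtain ⟨ks, hks, hβs⟩ := exists_minBeta_eq M v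
  obtain ⟨kb, hkb, hβb⟩ := exists_minBeta_eq C v
  have hMks : W M v - minBeta M v = welfare M v univ ks := by
    rw [← hks, ← hβs, bw_eq_welfare]; ring
  have hCkb : W C v - minBeta C v = welfare C v univ kb := by
    rw [← hkb, ← hβb, bw_eq_welfare]; ring
  have hC := bw_le_W C v ks
  rw [← hkb, bw_eq_welfare, bw_eq_welfare, hβ, hβ] at hC
  have hM := bw_le_W M v kb
  rw [← hks, bw_eq_welfare, bw_eq_welfare] at hM
  -- shrinking the boosts by `1 - μ` makes a welfare loss of more than `δ / μ` unprofitable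
  have hloss : μ * (welfare M v univ ks - welfare M v univ kb) ≤ δ := by
    nlinarith [(hw univ ks).2, (hw univ kb).1, mul_le_mul_of_nonneg_left hM (sub_nonneg.2 hμ1)]
  have : welfare M v univ ks - welfare M v univ kb ≤ δ / μ := by
    rw [le_div_iff₀ hμ0]; linarith
  rw [hMks, hCkb]
  linarith [(hw univ kb).2]

lemma pay_sub_le_pay_of_perturb
    (hw : ∀ s k, welfare C v s k ≤ welfare M v s k ∧ welfare M v s k ≤ welfare C v s k + δ)
    (hβ : ∀ k, (C k).2 = (1 - μ) * (M k).2) (hμ0 : 0 < μ) (hμ : μ ≤ 1 / 2) {B : ℝ}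
    (hB : ∀ k, 0 ≤ welfare M v univ k ∧ welfare M v univ k ≤ B) :
    pay M v - (m * (δ + 2 * μ * (B + δ)) + (δ + δ / μ)) ≤ pay C v := by
  have hsum : ∑ i, (WWo M v i - W M v)
      ≤ ∑ i, (WWo C v i - W C v) + m * (δ + 2 * μ * (B + δ)) :=
    calc _ ≤ ∑ i, (WWo C v i - W C v + (δ + 2 * μ * (B + δ))) :=
          sum_le_sum fun i _ => WWo_sub_W_le_of_perturb hw hβ hμ0.le hμ hB i
      _ = _ := by rw [sum_add_distrib, sum_const, card_univ, Fintype.card_fin, nsmul_eq_mul]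
  rw [pay_eq_sum_add, pay_eq_sum_add]
  linarith [W_sub_minBeta_le_of_perturb hw hβ hμ0 (by linarith)]

end Perturbation

section Allocation

variable {m n K : ℕ}

lemma welfare_mem_of_alloc_mem {M M' : Menu m n K} {v : Fin m → Fin n → ℝ} (hv : v ∈ VP m n)
    {r : ℝ} (hr : 0 ≤ r)
    (h : ∀ k i j, (M' k).1 i j ≤ (M k).1 i j ∧ (M k).1 i j ≤ (M' k).1 i j + r)
    (s : Finset (Fin m)) (k : Fin (K + 1)) :
    welfare M' v s k ≤ welfare M v s k ∧ welfare M v s k ≤ welfare M' v s k + m * r := by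
  have hbuyer : ∀ i, dotp (v i) ((M k).1 i) ≤ dotp (v i) ((M' k).1 i) + r := fun i =>
    calc dotp (v i) ((M k).1 i) ≤ ∑ j, v i j * ((M' k).1 i j + r) :=
          sum_le_sum fun j _ => mul_le_mul_of_nonneg_left (h k i j).2 ((hv i).1 j).1
      _ = dotp (v i) ((M' k).1 i) + (∑ j, v i j) * r := by
          simp only [mul_add, sum_add_distrib, sum_mul, dotp]
      _ ≤ dotp (v i) ((M' k).1 i) + r := by nlinarith [(hv i).2]
  refine ⟨sum_le_sum fun i _ => sum_le_sum fun j _ =>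
    mul_le_mul_of_nonneg_left (h k i j).1 ((hv i).1 j).1, ?_⟩
  calc welfare M v s k ≤ ∑ i ∈ s, (dotp (v i) ((M' k).1 i) + r) :=
        sum_le_sum fun i _ => hbuyer i
    _ = welfare M' v s k + s.card * r := by rw [sum_add_distrib, sum_const, nsmul_eq_mul]; rfl
    _ ≤ welfare M' v s k + m * r := by
      gcongr
      exact_mod_cast (card_le_univ s).trans (Fintype.card_fin m).le

lemma isMenu_comb {lam : ℝ} (h0 : 0 ≤ lam) (h1 : lam ≤ 1) {M M' : Menu m n K}
    (hM : IsMenu M) (hM' : IsMenu M') : IsMenu (comb lam M M') := by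
  refine ⟨fun k i j => ?_, fun k j => ?_, ?_⟩
  · have := hM.1 k i j
    have := hM'.1 k i j
    constructor <;> simp only [comb] <;> nlinarith
  · simp only [comb, sum_add_distrib, ← mul_sum]
    nlinarith [hM.2.1 k j, hM'.2.1 k j]
  · simp [comb, hM.2.2, hM'.2.2, Prod.ext_iff, funext_iff]

lemma comb_one (M M' : Menu m n K) : comb 1 M M' = M := by
  funext k
  simp [comb]

lemma isMenu_zero : IsMenu (0 : Menu m n K) :=
  ⟨fun _ _ _ => by simp, fun _ _ => by simp, rfl⟩

end Allocation

section Grid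

variable {m n K : ℕ}

noncomputable def gridIndex (D : ℕ) (t : ℝ) : Fin (D + 1) :=
  ⟨min ⌊t * D⌋₊ D, Nat.lt_succ_of_le (min_le_right _ _)⟩

noncomputable def gridMenu (D : ℕ) (ν : ℝ) (M : Menu m n K) : Menu m n K :=
  fun k => (fun i j => ((gridIndex D ((M k).1 i j) : ℕ) : ℝ) / D, (1 - ν) * (M k).2)

lemma gridIndex_div_le {D : ℕ} {t : ℝ} (ht : 0 ≤ t) :
    ((gridIndex D t : ℕ) : ℝ) / D ≤ t := by
  rcases Nat.eq_zero_or_pos D with rfl | hD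
  · simpa using ht
  rw [div_le_iff₀ (by positivity)]
  calc ((gridIndex D t : ℕ) : ℝ) ≤ ⌊t * D⌋₊ := by exact_mod_cast min_le_left _ _
    _ ≤ t * D := Nat.floor_le (by positivity)

lemma le_gridIndex_div_add {D : ℕ} (hD : 0 < D) {t : ℝ} (ht : t ≤ 1) :
    t ≤ ((gridIndex D t : ℕ) : ℝ) / D + 1 / D := by
  have hidx : (gridIndex D t : ℕ) = ⌊t * D⌋₊ :=
    min_eq_left (Nat.floor_le_of_le (mul_le_of_le_one_left (Nat.cast_nonneg D) ht))
  rw [hidx, ← add_div, le_div_iff₀ (by positivity)]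
  exact (Nat.lt_floor_add_one (t * D)).le

lemma isMenu_gridMenu (D : ℕ) (ν : ℝ) {M : Menu m n K} (hM : IsMenu M) :
    IsMenu (gridMenu D ν M) := by
  refine ⟨fun k i j => ⟨div_nonneg (Nat.cast_nonneg _) (Nat.cast_nonneg _),
      (gridIndex_div_le (hM.1 k i j).1).trans (hM.1 k i j).2⟩,
    fun k j => (sum_le_sum fun i _ => gridIndex_div_le (hM.1 k i j).1).trans (hM.2.1 k j), ?_⟩
  simp [gridMenu, gridIndex, hM.2.2, Prod.ext_iff, funext_iff]

lemma gridMenu_alloc_mem {D : ℕ} (hD : 0 < D) (ν : ℝ) {M : Menu m n K} (hM : IsMenu M)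
    (k : Fin (K + 1)) (i : Fin m) (j : Fin n) :
    (gridMenu D ν M k).1 i j ≤ (M k).1 i j ∧
      (M k).1 i j ≤ (gridMenu D ν M k).1 i j + 1 / D :=
  ⟨gridIndex_div_le (hM.1 k i j).1, le_gridIndex_div_add hD (hM.1 k i j).2⟩

lemma pay_sub_le_pay_comb_gridMenu {M : Menu m n K} (hM : IsMenu M)
    {v : Fin m → Fin n → ℝ} (hv : v ∈ VP m n) {D : ℕ} (hD : 0 < D) {ν : ℝ}
    (hν0 : 0 < ν) (hν : ν ≤ 1 / 2) {lam : ℝ} (h0 : 0 ≤ lam) (h1 : lam < 1) :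
    pay M v - (m * (m / D + 2 * ν * (m + m / D)) + (m / D + m / D / ν))
      ≤ pay (comb lam M (gridMenu D ν M)) v := by
  set C := comb lam M (gridMenu D ν M)
  have hw := welfare_mem_of_alloc_mem (M := M) (M' := C) hv (r := (1 - lam) / D)
    (div_nonneg (by linarith) (Nat.cast_nonneg D)) fun k i j => by
      have hgrid := gridMenu_alloc_mem hD ν hM k i j
      have hlam : 0 ≤ 1 - lam := by linarith
      have : (1 - lam) / D = (1 - lam) * (1 / D) := by ring
      simp only [C, comb]
      constructor <;> nlinarith [mul_le_mul_of_nonneg_left hgrid.1 hlam,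
        mul_le_mul_of_nonneg_left hgrid.2 hlam]
  have hβ : ∀ k, (C k).2 = (1 - (1 - lam) * ν) * (M k).2 := fun k => by
    simp only [C, comb, gridMenu]; ring
  have hμ : (1 - lam) * ν ≤ ν := by nlinarith
  refine le_trans ?_ (pay_sub_le_pay_of_perturb hw hβ (by positivity) (by linarith) (B := m)
    fun k => ⟨welfare_nonneg hM hv _ k, welfare_le hM hv _ k⟩)
  have hδ : (m : ℝ) * ((1 - lam) / D) ≤ m / D := by
    rw [mul_div_assoc']
    gcongr
    exact mul_le_of_le_one_right (Nat.cast_nonneg m) (by linarith)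
  have hratio : m * ((1 - lam) / D) / ((1 - lam) * ν) = m / D / ν := by
    field_simp [(by linarith : (1 : ℝ) - lam ≠ 0)]
  rw [hratio]
  gcongr

end Grid

section Reducibility

variable {m n K : ℕ}

lemma reducible_zero_of_dominating (F : Measure (Fin m → Fin n → ℝ)) [IsProbabilityMeasure F]
    {M : Menu m n K} (rep : Fin (K + 1) → Fin (K + 1))
    (hrep : ∀ k, (M (rep k)).1 = (M k).1 ∧ (M k).2 ≤ (M (rep k)).2)
    (hcard : ((insert 0 (univ.image rep)).card : ℝ) ≤ √(K + 1)) :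
    Reducible F M 0 := by
  have hmem : ∀ k, rep k ∈ insert 0 (univ.image rep) :=
    fun k => mem_insert_of_mem (mem_image_of_mem rep (mem_univ k))
  have hwelfare : ∀ v s k, welfare M v s (rep k) = welfare M v s k := fun v s k => by
    simp only [welfare, (hrep k).1]
  have hgood : ∀ v, GoodEvent M (insert 0 (univ.image rep)) v := by
    intro v
    refine ⟨?_, fun i => ?_⟩
    · obtain ⟨k, hk, hβ⟩ := exists_minBeta_eq M v
      have hle := bw_le_W M v (rep k)
      rw [← hk, bw_eq_welfare, bw_eq_welfare, hwelfare] at hle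
      have hβeq : (M (rep k)).2 = (M k).2 := by linarith [(hrep k).2]
      refine ⟨rep k, hmem k, ?_, hβeq.trans hβ⟩
      rw [← hk, bw_eq_welfare, bw_eq_welfare, hwelfare, hβeq]
    · obtain ⟨k, hk⟩ := exists_bwWo_eq_WWo M v i
      refine ⟨rep k, hmem k, le_antisymm (bwWo_le_WWo M v i _) ?_⟩
      rw [← hk, bwWo_eq_welfare, bwWo_eq_welfare, hwelfare]
      linarith [(hrep k).2]
  refine ⟨_, mem_insert_self _ _, hcard, ?_⟩
  simp [hgood]

lemma exists_dominating_rep {α : Type*} [Fintype α] (M : Menu m n K) (c : Fin (K + 1) → α)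
    (hc : ∀ k l, c k = c l → (M k).1 = (M l).1) :
    ∃ rep : Fin (K + 1) → Fin (K + 1),
      (∀ k, (M (rep k)).1 = (M k).1 ∧ (M k).2 ≤ (M (rep k)).2) ∧
      (univ.image rep).card ≤ Fintype.card α := by
  classical
  have hcell : ∀ a : α, ∃ r, ∀ k, c k = a → c r = a ∧ (M k).2 ≤ (M r).2 := by
    intro a
    by_cases h : (univ.filter fun k => c k = a).Nonempty
    · obtain ⟨r, hr, hmax⟩ := exists_max_image _ (fun k => (M k).2) h
      exact ⟨r, fun k hk =>
        ⟨(mem_filter.1 hr).2, hmax k (mem_filter.2 ⟨mem_univ k, hk⟩)⟩⟩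
    · exact ⟨0, fun k hk => absurd ⟨k, mem_filter.2 ⟨mem_univ k, hk⟩⟩ h⟩
  choose g hg using hcell
  refine ⟨g ∘ c, fun k => ⟨hc _ _ (hg _ k rfl).1, (hg _ k rfl).2⟩, ?_⟩
  rw [← image_image]
  exact card_image_le.trans (card_le_univ _)

lemma reducible_zero_zero (F : Measure (Fin m → Fin n → ℝ)) [IsProbabilityMeasure F] :
    Reducible F (0 : Menu m n K) 0 :=
  reducible_zero_of_dominating F (fun _ => 0) (fun _ => ⟨rfl, le_rfl⟩) <| by
    simp [image_const univ_nonempty]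

lemma reducible_gridMenu (F : Measure (Fin m → Fin n → ℝ)) [IsProbabilityMeasure F]
    (D : ℕ) (ν : ℝ) (M : Menu m n K) (hcard : ((D + 1) ^ (n * m) + 1 : ℝ) ≤ √(K + 1)) :
    Reducible F (gridMenu D ν M) 0 := by
  obtain ⟨rep, hrep, hcard'⟩ := exists_dominating_rep (gridMenu D ν M)
    (fun k i j => gridIndex D ((M k).1 i j))
    fun _ _ h =>
      congrArg (fun (c : Fin m → Fin n → Fin (D + 1)) i j => ((c i j : ℕ) : ℝ) / D) h
  refine reducible_zero_of_dominating F rep hrep (le_trans ?_ hcard)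
  have : (insert 0 (univ.image rep)).card ≤ (D + 1) ^ (n * m) + 1 := by
    refine (card_insert_le _ _).trans (Nat.add_le_add_right (hcard'.trans_eq ?_) 1)
    simp [pow_mul]
  exact_mod_cast this

end Reducibility

section Arithmetic

lemma grid_error_le {m ε D : ℝ} (hm : 1 ≤ m) (hε0 : 0 < ε) (hε : ε ≤ 1 / 4)
    (hD : 15 * m ^ 3 ≤ ε ^ 2 * D) :
    m * (m / D + 2 * (ε / (5 * m ^ 2)) * (m + m / D)) + (m / D + m / D / (ε / (5 * m ^ 2)))
      ≤ ε := by
  have hm3 : 1 ≤ m ^ 3 := one_le_pow₀ hm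
  have hDpos : 0 < D := pos_of_mul_pos_right (by linarith) (sq_nonneg ε)
  set η := m / D
  have hη0 : 0 ≤ η := by positivity
  have hη : 15 * m ^ 2 * η ≤ ε ^ 2 := by
    simp only [η]; rw [← mul_div_assoc, div_le_iff₀ hDpos]; nlinarith
  have hmη : m * η ≤ ε / 60 := by nlinarith
  have hratio : η / (ε / (5 * m ^ 2)) ≤ ε / 3 := by
    rw [div_div_eq_mul_div, div_le_iff₀ hε0]; nlinarith
  have hboost : m * (2 * (ε / (5 * m ^ 2)) * (m + η)) = 2 * ε / 5 + 2 * ε / 5 * (η / m) := by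
    field_simp
  have hηm : η / m ≤ η := div_le_self hη0 hm
  nlinarith

lemma exists_grid_resolution {m ε : ℝ} (hm : 1 ≤ m) (hε0 : 0 < ε) (hε : ε ≤ 1 / 4) :
    ∃ D : ℕ, 0 < D ∧ D + 1 < ⌈16 * m ^ 3 / ε ^ 2⌉₊ ∧ 15 * m ^ 3 ≤ ε ^ 2 * D := by
  set N := ⌈16 * m ^ 3 / ε ^ 2⌉₊
  have hm3 : 1 ≤ m ^ 3 := one_le_pow₀ hm
  have hN : 16 * m ^ 3 ≤ ε ^ 2 * N := by
    rw [← div_le_iff₀' (by positivity)]; exact Nat.le_ceil _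
  have hN2 : 2 ≤ N := by
    have : (2 : ℝ) ≤ N := by nlinarith
    exact_mod_cast this
  have hD : 15 * m ^ 3 ≤ ε ^ 2 * (N - 2 : ℕ) := by
    rw [Nat.cast_sub hN2]; push_cast; nlinarith
  have hDpos : (0 : ℝ) < (N - 2 : ℕ) := pos_of_mul_pos_right (by linarith) (sq_nonneg ε)
  exact ⟨N - 2, by exact_mod_cast hDpos, by omega, hD⟩

lemma add_one_pow_add_one_le_sqrt {a N q K : ℕ} (ha : a + 1 < N) (hq : q ≠ 0)
    (hK : N ^ (2 * q) ≤ K + 1) : ((a + 1) ^ q + 1 : ℝ) ≤ √(K + 1) := by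
  have hlt : (a + 1) ^ q + 1 ≤ N ^ q := Nat.pow_lt_pow_left ha hq
  have hsq : ((a + 1) ^ q + 1) ^ 2 ≤ K + 1 :=
    (Nat.pow_le_pow_left hlt 2).trans (by rwa [← pow_mul, mul_comm])
  rw [Real.le_sqrt (by positivity) (by positivity)]
  exact_mod_cast hsq

end Arithmetic

/-- For `0 < ε ≤ 1/4` and any AMA menu `M₁` with
`K + 1 ≥ ⌈16 m³ / ε²⌉^(2 n m)` options, there is a `0`-reducible AMA menu `M₁'` on the
same index set such that every convex combination of `M₁` and `M₁'` has revenue at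
least `Rev M₁ - ε`. -/
theorem statement16 {m n K : ℕ} (hm : 0 < m) (F : Measure (Fin m → Fin n → ℝ))
    [IsProbabilityMeasure F] (hFV : F (VP m n) = 1)
    (ε : ℝ) (hε0 : 0 < ε) (hε4 : ε ≤ 1 / 4)
    (hK : ⌈16 * (m : ℝ) ^ 3 / ε ^ 2⌉₊ ^ (2 * n * m) ≤ K + 1)
    (M₁ : Menu m n K) (hM₁ : IsMenu M₁) :
    ∃ M₁' : Menu m n K, IsMenu M₁' ∧ Reducible F M₁' 0 ∧
      ∀ lam ∈ Set.Icc (0 : ℝ) 1, Rev F (comb lam M₁ M₁') ≥ Rev F M₁ - ε := by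
  rcases Nat.eq_zero_or_pos n with rfl | hn
  · refine ⟨0, isMenu_zero, reducible_zero_zero F, fun lam _ => ?_⟩
    simp [Rev, pay_eq_zero_of_no_items, hε0.le]
  have hm1 : (1 : ℝ) ≤ m := by exact_mod_cast hm
  obtain ⟨D, hDpos, hDN, hD⟩ := exists_grid_resolution hm1 hε0 hε4
  set ν := ε / (5 * (m : ℝ) ^ 2) with hν
  have hν2 : ν ≤ 1 / 2 := by rw [hν, div_le_iff₀ (by positivity)]; nlinarith
  refine ⟨gridMenu D ν M₁, isMenu_gridMenu D ν hM₁, reducible_gridMenu F D ν M₁ ?_,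
    fun lam hlam => ?_⟩
  · exact_mod_cast add_one_pow_add_one_le_sqrt hDN (by positivity) (by rwa [← mul_assoc])
  rcases hlam.2.eq_or_lt with rfl | hlt
  · rw [comb_one]; linarith
  have hrev := rev_sub_le_rev F hFV hM₁
    (isMenu_comb hlam.1 hlam.2 hM₁ (isMenu_gridMenu D ν hM₁)) fun v hv =>
      pay_sub_le_pay_comb_gridMenu hM₁ hv hDpos (by positivity) hν2 hlam.1 hlt
  rw [hν] at hrev
  linarith [grid_error_le hm1 hε0 hε4 hD]

end AMA
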